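/- Let β ≥ 2 and let f : ℝ → ℂ be a Schwartz function. Then ‖x ↦ -f''(x) + |x|^β·f(x)‖² = ‖f''‖² + ‖x ↦ |x|^β·f(x)‖² + 2·‖x ↦ |x|^{β/2}·f'(x)‖² − β(β−1)·‖x ↦ |x|^{(β−2)/2}·f(x)‖². -/

import Mathlib

/-!
Expanding the square gives `‖f''‖² + ‖V f‖² - 2 ∫ V ⟪f, f''⟫`. Integrating by parts against `V`
turns `∫ V ⟪f, f''⟫` into `-∫ V ‖f'‖² - ∫ V' ⟪f, f'⟫`, and since `2 ⟪f, f'⟫ = (‖f‖²)'` a second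
integration by parts gives `2 ∫ V' ⟪f, f'⟫ = -∫ V'' ‖f‖²`. Boundary terms vanish and every
integrand is integrable because `V`, `V'`, `V''` grow at most polynomially while `f` is Schwartz.
-/

open MeasureTheory

/-- The `L²(ℝ)` norm of a function `f : ℝ → ℂ`. -/
noncomputable def L2N (f : ℝ → ℂ) : ℝ := (∫ x : ℝ, ‖f x‖ ^ 2) ^ ((1 : ℝ) / 2)

open scoped SchwartzMap RealInnerProductSpace

lemma L2N_sq (g : ℝ → ℂ) : L2N g ^ 2 = ∫ x, ‖g x‖ ^ 2 := by
  rw [L2N, ← Real.rpow_natCast, ← Real.rpow_mul (integral_nonneg fun x => sq_nonneg _)]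
  norm_num

/-- Unlike `Function.HasTemperateGrowth`, no smoothness is required: `|x| ^ β` need not be smooth
at `0`. -/
def HasPolynomialGrowth (g : ℝ → ℝ) : Prop :=
  ∃ (k : ℕ) (C : ℝ), ∀ x, |g x| ≤ C * (1 + |x|) ^ k

namespace HasPolynomialGrowth

variable {g h : ℝ → ℝ}

lemma id : HasPolynomialGrowth fun x => x :=
  ⟨1, 1, fun x => by simp⟩

lemma abs_rpow {p : ℝ} (hp : 0 ≤ p) : HasPolynomialGrowth fun x => |x| ^ p := by
  refine ⟨⌈p⌉₊, 1, fun x => ?_⟩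
  have h1 : 1 ≤ 1 + |x| := le_add_of_nonneg_right (abs_nonneg x)
  calc |(|x| ^ p)| = |x| ^ p := abs_of_nonneg (Real.rpow_nonneg (abs_nonneg x) p)
    _ ≤ (1 + |x|) ^ p := by gcongr; linarith
    _ ≤ (1 + |x|) ^ (⌈p⌉₊ : ℝ) := Real.rpow_le_rpow_of_exponent_le h1 (Nat.le_ceil p)
    _ = 1 * (1 + |x|) ^ ⌈p⌉₊ := by rw [Real.rpow_natCast, one_mul]

lemma mul (hg : HasPolynomialGrowth g) (hh : HasPolynomialGrowth h) :
    HasPolynomialGrowth (g * h) := by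
  obtain ⟨k, C, hC⟩ := hg
  obtain ⟨m, D, hD⟩ := hh
  refine ⟨k + m, C * D, fun x => ?_⟩
  calc |(g * h) x| = |g x| * |h x| := abs_mul _ _
    _ ≤ (C * (1 + |x|) ^ k) * (D * (1 + |x|) ^ m) :=
        mul_le_mul (hC x) (hD x) (abs_nonneg _) ((abs_nonneg _).trans (hC x))
    _ = C * D * (1 + |x|) ^ (k + m) := by ring

lemma const_mul (c : ℝ) (hg : HasPolynomialGrowth g) : HasPolynomialGrowth fun x => c * g x :=
  (show HasPolynomialGrowth fun _ => c from ⟨0, |c|, fun x => by simp⟩).mul hg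

end HasPolynomialGrowth

lemma hasDerivAt_abs_rpow_mul_self {p : ℝ} (hp : 0 ≤ p) (x : ℝ) :
    HasDerivAt (fun y => |y| ^ p * y) ((p + 1) * |x| ^ p) x := by
  rcases hp.eq_or_lt with rfl | hp
  · simpa using hasDerivAt_id' x
  rcases eq_or_ne x 0 with rfl | hx
  · rw [hasDerivAt_iff_tendsto_slope_zero]
    have hcont : Continuous fun t : ℝ => |t| ^ p :=
      continuous_abs.rpow_const fun _ => Or.inr hp.le
    refine (hcont.tendsto' 0 _ (by simp [hp.ne'])).mono_left nhdsWithin_le_nhds |>.congr' ?_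
    filter_upwards [self_mem_nhdsWithin] with t (ht : t ≠ 0)
    simp only [zero_add, abs_zero, mul_zero, sub_zero, smul_eq_mul]
    field_simp
  · have habs := ((hasDerivAt_abs hx).rpow_const (p := p) (Or.inl (abs_ne_zero.2 hx))).fun_mul
      (hasDerivAt_id' x)
    refine habs.congr_deriv ?_
    rw [Real.rpow_sub_one (abs_ne_zero.2 hx)]
    field_simp
    linear_combination p * sign_mul_self x

namespace SchwartzMap

variable {F : Type*} [NormedAddCommGroup F] [InnerProductSpace ℝ F]

lemma integrable_mul_inner {g : ℝ → ℝ} (hg : HasPolynomialGrowth g) (hgm : Measurable g)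
    (φ ψ : 𝓢(ℝ, F)) : Integrable fun x => g x * ⟪φ x, ψ x⟫ := by
  obtain ⟨k, C, hC⟩ := hg
  set M := SchwartzMap.seminorm ℝ 0 0 ψ
  have hmaj : Integrable fun x => C * 2 ^ (k - 1) * M * (‖φ x‖ + ‖x‖ ^ k * ‖φ x‖) :=
    (φ.integrable.norm.add (φ.integrable_pow_mul volume k)).const_mul _
  refine hmaj.mono' (hgm.aestronglyMeasurable.mul
    (φ.continuous.inner ψ.continuous).aestronglyMeasurable) (ae_of_all _ fun x => ?_)
  have hpow : (1 + |x|) ^ k ≤ 2 ^ (k - 1) * (1 + ‖x‖ ^ k) := by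
    simpa using add_pow_le zero_le_one (abs_nonneg x) k
  calc ‖g x * ⟪φ x, ψ x⟫‖ = |g x| * |⟪φ x, ψ x⟫| := by simp only [norm_mul, Real.norm_eq_abs]
    _ ≤ (C * (1 + |x|) ^ k) * (‖φ x‖ * M) :=
        mul_le_mul (hC x) ((abs_real_inner_le_norm _ _).trans
          (mul_le_mul_of_nonneg_left (norm_le_seminorm ℝ ψ x) (norm_nonneg _)))
          (abs_nonneg _) ((abs_nonneg _).trans (hC x))
    _ ≤ (C * (2 ^ (k - 1) * (1 + ‖x‖ ^ k))) * (‖φ x‖ * M) := by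
        have hC0 : 0 ≤ C := by simpa using (abs_nonneg _).trans (hC 0)
        gcongr
    _ = C * 2 ^ (k - 1) * M * (‖φ x‖ + ‖x‖ ^ k * ‖φ x‖) := by ring

lemma integral_mul_deriv_inner {u u' : ℝ → ℝ} (hu : ∀ x, HasDerivAt u (u' x) x)
    (hu_growth : HasPolynomialGrowth u) (hu'_growth : HasPolynomialGrowth u')
    (hu'm : Measurable u') (φ ψ : 𝓢(ℝ, F)) :
    ∫ x, u x * (⟪φ x, deriv ψ x⟫ + ⟪deriv φ x, ψ x⟫) = -∫ x, u' x * ⟪φ x, ψ x⟫ := by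
  have hum : Measurable u :=
    (continuous_iff_continuousAt.2 fun x => (hu x).continuousAt).measurable
  refine integral_mul_deriv_eq_deriv_mul_of_integrable (fun x _ => hu x)
    (fun x _ => (φ.hasDerivAt x).inner ℝ (ψ.hasDerivAt x)) ?_
    (integrable_mul_inner hu'_growth hu'm φ ψ) (integrable_mul_inner hu_growth hum φ ψ)
  exact ((integrable_mul_inner hu_growth hum φ (derivCLM ℝ F ψ)).add
    (integrable_mul_inner hu_growth hum (derivCLM ℝ F φ) ψ)).congr
    (ae_of_all _ fun x => (mul_add _ _ _).symm)

theorem integral_norm_sq_neg_deriv_deriv_add_smul {V V' V'' : ℝ → ℝ}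
    (hV : ∀ x, HasDerivAt V (V' x) x) (hV' : ∀ x, HasDerivAt V' (V'' x) x)
    (gV : HasPolynomialGrowth V) (gV' : HasPolynomialGrowth V') (gV'' : HasPolynomialGrowth V'')
    (f : 𝓢(ℝ, F)) :
    ∫ x, ‖-deriv (deriv f) x + V x • f x‖ ^ 2 =
      (∫ x, ‖deriv (deriv f) x‖ ^ 2) + (∫ x, ‖V x • f x‖ ^ 2)
        + 2 * (∫ x, V x * ‖deriv f x‖ ^ 2) - ∫ x, V'' x * ‖f x‖ ^ 2 := by
  set f₁ := derivCLM ℝ F f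
  set f₂ := derivCLM ℝ F f₁
  have hVm : Measurable V := (continuous_iff_continuousAt.2 fun x => (hV x).continuousAt).measurable
  have hV'm : Measurable V' :=
    (continuous_iff_continuousAt.2 fun x => (hV' x).continuousAt).measurable
  have hV''m : Measurable V'' := by
    simpa only [funext fun x => (hV' x).deriv] using measurable_deriv V'
  have ibp₁ : ∫ x, V x * (⟪f x, f₂ x⟫ + ⟪f₁ x, f₁ x⟫) = -∫ x, V' x * ⟪f x, f₁ x⟫ :=
    integral_mul_deriv_inner hV gV gV' hV'm f f₁
  have ibp₂ : ∫ x, V' x * (⟪f x, f₁ x⟫ + ⟪f x, f₁ x⟫) = -∫ x, V'' x * ⟪f x, f x⟫ := by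
    refine (integral_congr_ae (ae_of_all _ fun x => ?_)).trans
      (integral_mul_deriv_inner hV' gV' gV'' hV''m f f)
    change V' x * (⟪f x, f₁ x⟫ + ⟪f x, f₁ x⟫) = V' x * (⟪f x, f₁ x⟫ + ⟪f₁ x, f x⟫)
    rw [real_inner_comm (f x) (f₁ x)]
  simp only [mul_add] at ibp₁ ibp₂
  rw [integral_add (integrable_mul_inner gV hVm _ _) (integrable_mul_inner gV hVm _ _)] at ibp₁
  rw [integral_add (integrable_mul_inner gV' hV'm _ _) (integrable_mul_inner gV' hV'm _ _)] at ibp₂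
  simp only [real_inner_self_eq_norm_sq] at ibp₁ ibp₂
  have expand : ∀ x, ‖-f₂ x + V x • f x‖ ^ 2 =
      ‖f₂ x‖ ^ 2 + ‖V x • f x‖ ^ 2 - 2 * (V x * ⟪f x, f₂ x⟫) := fun x => by
    rw [← sub_eq_neg_add, norm_sub_sq_real, real_inner_smul_left]
    ring
  have int_f₂ : Integrable fun x => ‖f₂ x‖ ^ 2 :=
    (f₂.memLp 2 volume).integrable_norm_pow two_ne_zero
  have int_Vf : Integrable fun x => ‖V x • f x‖ ^ 2 := by
    refine (integrable_mul_inner (gV.mul gV) (hVm.mul hVm) f f).congr (ae_of_all _ fun x => ?_)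
    change V x * V x * ⟪f x, f x⟫ = ‖V x • f x‖ ^ 2
    rw [norm_smul, mul_pow, Real.norm_eq_abs, sq_abs, real_inner_self_eq_norm_sq, sq (V x)]
  change ∫ x, ‖-f₂ x + V x • f x‖ ^ 2 = (∫ x, ‖f₂ x‖ ^ 2) + (∫ x, ‖V x • f x‖ ^ 2)
    + 2 * (∫ x, V x * ‖f₁ x‖ ^ 2) - ∫ x, V'' x * ‖f x‖ ^ 2
  simp only [expand]
  rw [integral_sub (int_f₂.fun_add int_Vf) ((integrable_mul_inner gV hVm f f₂).const_mul 2),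
    integral_add int_f₂ int_Vf, integral_const_mul]
  linarith

end SchwartzMap

lemma norm_abs_rpow_half_smul_sq {E : Type*} [NormedAddCommGroup E] [NormedSpace ℝ E]
    (x p : ℝ) (z : E) : ‖|x| ^ (p / 2) • z‖ ^ 2 = |x| ^ p * ‖z‖ ^ 2 := by
  rw [norm_smul, mul_pow, Real.norm_eq_abs, sq_abs, ← Real.rpow_natCast,
    ← Real.rpow_mul (abs_nonneg x)]
  norm_num

/-- The identity
`‖(-d²/dx² + V)f‖² = ‖f''‖² + ‖Vf‖² + 2‖V^{1/2}f'‖² − ‖(V'')^{1/2}f‖²` for `V(x) = |x|^β`. -/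
theorem stmt_10 (β : ℝ) (hβ : 2 ≤ β) (f : SchwartzMap ℝ ℂ) :
    L2N (fun x : ℝ => -(deriv (deriv ⇑f) x) + ((|x| ^ β : ℝ) : ℂ) * f x) ^ 2
      = L2N (deriv (deriv ⇑f)) ^ 2
        + L2N (fun x : ℝ => ((|x| ^ β : ℝ) : ℂ) * f x) ^ 2
        + 2 * L2N (fun x : ℝ => ((|x| ^ (β / 2) : ℝ) : ℂ) * deriv (⇑f) x) ^ 2
        - β * (β - 1) * L2N (fun x : ℝ => ((|x| ^ ((β - 2) / 2) : ℝ) : ℂ) * f x) ^ 2 := by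
  have hβ₂ : 0 ≤ β - 2 := by linarith
  have hV (x : ℝ) : HasDerivAt (fun y => |y| ^ β) (β * (|x| ^ (β - 2) * x)) x :=
    (hasDerivAt_abs_rpow x (by linarith)).congr_deriv (mul_assoc _ _ _)
  have hV' (x : ℝ) :
      HasDerivAt (fun y => β * (|y| ^ (β - 2) * y)) (β * (β - 1) * |x| ^ (β - 2)) x :=
    ((hasDerivAt_abs_rpow_mul_self hβ₂ x).const_mul β).congr_deriv (by ring)
  have key := SchwartzMap.integral_norm_sq_neg_deriv_deriv_add_smul hV hV'
    (.abs_rpow (by linarith)) (((HasPolynomialGrowth.abs_rpow hβ₂).mul .id).const_mul β)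
    ((HasPolynomialGrowth.abs_rpow hβ₂).const_mul _) f
  simp only [L2N_sq, ← Complex.real_smul, norm_abs_rpow_half_smul_sq, key, mul_assoc,
    integral_const_mul]
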